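/- arXiv:1303.3133 — 2 statements merged into one kernel-verified Lean document; each statement's English description precedes it below -/
import Mathlib

section
/- Let α ∈ (0,1) with α = β, and let s(d) = a − b denote the spread of d = (b,a)ᵀ. For any d, the composed updates satisfy: s(S₂S₁ d) = s(d), s(S₁S₂ d) = s(d), s(S₄S₃ d) = s(d), and s(S₃S₄ d) = s(d). That is, any two-period block consisting of one limit-type and one market-type trade leaves the spread unchanged. -/
/-! The spread covector `(-1, 1)` is a left eigenvector of all four trade matrices: the limit
trades `S₁`, `S₃` scale the spread by `1/(1+α)` and the market trades `S₂`, `S₄` by `1+α`, so a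
block of one trade of each type multiplies it by `1`. -/

open Matrix

section Spread

variable {R : Type*} [CommRing R]

theorem sub_eq_neg_one_one_dotProduct (d : Fin 2 → R) : d 1 - d 0 = ![-1, 1] ⬝ᵥ d := by
  simp only [dotProduct, Fin.sum_univ_two, cons_val_zero, cons_val_one, cons_val_fin_one]
  ring

theorem spread_mulVec_of_vecMul_eq_smul {M : Matrix (Fin 2) (Fin 2) R} {c : R}
    (hM : ![-1, 1] ᵥ* M = c • ![-1, 1]) (d : Fin 2 → R) :
    (M *ᵥ d) 1 - (M *ᵥ d) 0 = c * (d 1 - d 0) := by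
  rw [sub_eq_neg_one_one_dotProduct, sub_eq_neg_one_one_dotProduct, dotProduct_mulVec, hM,
    smul_dotProduct, smul_eq_mul]

theorem spread_mul_mulVec_of_vecMul_eq_smul {A B : Matrix (Fin 2) (Fin 2) R} {a b : R}
    (hA : ![-1, 1] ᵥ* A = a • ![-1, 1]) (hB : ![-1, 1] ᵥ* B = b • ![-1, 1]) (hab : a * b = 1)
    (d : Fin 2 → R) :
    ((A * B) *ᵥ d) 1 - ((A * B) *ᵥ d) 0 = d 1 - d 0 := by
  rw [← mulVec_mulVec, spread_mulVec_of_vecMul_eq_smul hA, spread_mulVec_of_vecMul_eq_smul hB,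
    ← mul_assoc, hab, one_mul]

end Spread

section Trades

variable {K : Type*} [Field K] {α : K}

theorem vecMul_buyLimit (hα : 1 + α ≠ 0) :
    ![-1, 1] ᵥ* !![1/(1+α), α/(1+α); 0, 1] = (1 + α)⁻¹ • ![-1, 1] := by
  ext i; fin_cases i <;> simp [vecMul, dotProduct, Fin.sum_univ_two]
  field_simp
  ring

theorem vecMul_buyMarket :
    ![-1, 1] ᵥ* !![1, 0; -α, 1+α] = (1 + α) • ![-1, 1] := by
  ext i; fin_cases i <;> simp [vecMul, dotProduct, Fin.sum_univ_two]
  ring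

theorem vecMul_sellLimit (hα : 1 + α ≠ 0) :
    ![-1, 1] ᵥ* !![1, 0; α/(1+α), 1/(1+α)] = (1 + α)⁻¹ • ![-1, 1] := by
  ext i; fin_cases i <;> simp [vecMul, dotProduct, Fin.sum_univ_two]
  field_simp
  ring

theorem vecMul_sellMarket :
    ![-1, 1] ᵥ* !![1+α, -α; 0, 1] = (1 + α) • ![-1, 1] := by
  ext i; fin_cases i <;> simp [vecMul, dotProduct, Fin.sum_univ_two]
  ring

end Trades

theorem stmt_7 (α : ℝ) (hα : α ∈ Set.Ioo (0:ℝ) 1) :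
    let S1 : Matrix (Fin 2) (Fin 2) ℝ := !![1/(1+α), α/(1+α); 0, 1]
    let S2 : Matrix (Fin 2) (Fin 2) ℝ := !![1, 0; -α, 1+α]
    let S3 : Matrix (Fin 2) (Fin 2) ℝ := !![1, 0; α/(1+α), 1/(1+α)]
    let S4 : Matrix (Fin 2) (Fin 2) ℝ := !![1+α, -α; 0, 1]
    let s : (Fin 2 → ℝ) → ℝ := fun d => d 1 - d 0
    ∀ d : Fin 2 → ℝ,
      s ((S2 * S1).mulVec d) = s d ∧ s ((S1 * S2).mulVec d) = s d ∧
      s ((S4 * S3).mulVec d) = s d ∧ s ((S3 * S4).mulVec d) = s d := by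
  intro S1 S2 S3 S4 s d
  have hα' : 1 + α ≠ 0 := by linarith [hα.1]
  have hright := mul_inv_cancel₀ hα'
  have hleft := inv_mul_cancel₀ hα'
  exact ⟨spread_mul_mulVec_of_vecMul_eq_smul vecMul_buyMarket (vecMul_buyLimit hα') hright d,
    spread_mul_mulVec_of_vecMul_eq_smul (vecMul_buyLimit hα') vecMul_buyMarket hleft d,
    spread_mul_mulVec_of_vecMul_eq_smul vecMul_sellMarket (vecMul_sellLimit hα') hright d,
    spread_mul_mulVec_of_vecMul_eq_smul (vecMul_sellLimit hα') vecMul_sellMarket hleft d⟩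
end

section
/- Let α ∈ (0,1), s̲ > 0, γ ∈ [α/(1+α), 1) with (1+α)s̲ ≤ (1−γ)ā < (1+α)²s̲. Then: (a) for any state w with spread s(w) = (1−γ)ā, one limit-type update gives a spread s(w)/(1+α) satisfying s̲ ≤ s(w)/(1+α) < (1+α)s̲; and (b) for any w with s(w) = (1+α)s̲, one market-type update gives spread (1+α)²s̲ > (1−γ)ā. Hence any spread value attainable under the controlled dynamics starting in ((1+α)s̲, (1−γ)ā) remains in the open interval (s̲, (1+α)³s̲). -/
theorem stmt_19 (α sl abar γ : ℝ) (hα : α ∈ Set.Ioo (0:ℝ) 1) (hsl : 0 < sl)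
    (hγ : γ ∈ Set.Ico (α/(1+α)) 1)
    (hlo : (1+α)*sl ≤ (1-γ)*abar) (hhi : (1-γ)*abar < (1+α)^2*sl) :
    -- (a) limit-type update at the upper boundary of U₂
    (sl ≤ (1-γ)*abar/(1+α) ∧ (1-γ)*abar/(1+α) < (1+α)*sl) ∧
    -- (b) market-type update at the lower boundary of U₂
    ((1+α)*((1+α)*sl) > (1-γ)*abar) ∧
    -- (c) controlled spread dynamics stays in (s̲, (1+α)³s̲)
    (∀ s : ℕ → ℝ,
      s 0 ∈ Set.Ioo ((1+α)*sl) ((1-γ)*abar) →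
      (∀ n : ℕ, s (n+1) = s n / (1+α) ∨ s (n+1) = (1+α) * s n) →
      (∀ n : ℕ, (1-γ)*abar < s n → s (n+1) = s n / (1+α)) →
      (∀ n : ℕ, s n < (1+α)*sl → s (n+1) = (1+α) * s n) →
      ∀ n : ℕ, s n ∈ Set.Ioo sl ((1+α)^3 * sl)) := by
  obtain ⟨hα0, hα1⟩ := hα
  have h1 : (0:ℝ) < 1+α := by linarith
  have h1' : (1:ℝ)+α ≠ 0 := ne_of_gt h1
  refine ⟨⟨?_, ?_⟩, ?_, ?_⟩
  · rw [le_div_iff₀ h1]; linarith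
  · rw [div_lt_iff₀ h1]; nlinarith
  · nlinarith
  · intro s hs0 hmove hdiv hmul n
    obtain ⟨h0lo, h0hi⟩ := hs0
    have key : ∀ n, s n = s 0 / (1+α) ∨ s n = s 0 ∨ s n = (1+α) * s 0 := by
      intro n
      induction n with
      | zero => right; left; rfl
      | succ n ih =>
        rcases ih with h | h | h
        · right; left
          have hlt : s n < (1+α)*sl := by
            rw [h, div_lt_iff₀ h1]; nlinarith
          rw [hmul n hlt, h]; field_simp
        · rcases hmove n with h' | h'
          · left; rw [h', h]
          · right; right; rw [h', h]
        · right; left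
          have hgt : (1-γ)*abar < s n := by rw [h]; nlinarith
          rw [hdiv n hgt, h]; field_simp
    rcases key n with h | h | h <;> rw [Set.mem_Ioo, h] <;> constructor
    · rw [lt_div_iff₀ h1]; nlinarith
    · rw [div_lt_iff₀ h1]; nlinarith
    · nlinarith
    · nlinarith
    · nlinarith
    · nlinarith
end
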